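/- Define the single-imputation variance estimator under posterior-draw imputation σ̂²_SI,PD = σ²·(U_obs/(n − 1))·(1 + (U_imp + (n_mis·n_obs/n)·(Z̄_imp + Z_PD)²)/U_PD). If ν_PD > 2 then E[σ̂²_SI,PD] − σ² = −σ²·n_mis·(ν_prior − 2)/((n − 1)·(n_obs + ν_prior − 3)); in particular σ̂²_SI,PD is unbiased if and only if ν_prior = 2. -/

import Mathlib

/-!
By independence, the expectation of `U_obs * (1 + (U_imp + c (Z_imp + Z_PD)²) / U_PD)` factorises
as `E[U_obs] * (1 + E[U_imp + c (Z_imp + Z_PD)²] * E[U_PD⁻¹])`. The gamma density satisfies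
`x γ_{a,r}(x) = (a / r) γ_{a+1,r}(x)`, so a `χ²_k` variable has mean `k` and, for `k > 2`, inverse
mean `1 / (k - 2)`. Since `Z_imp + Z_PD ~ N(0, 1/n_mis + 1/n_obs)` and `c = n_mis n_obs / n` is the
reciprocal of that variance, the middle expectation is `(n_mis - 1) + 1 = n_mis`; the bias formula
is then a rational identity in `n_obs`, `n_mis`, `ν_prior`.
-/

open MeasureTheory ProbabilityTheory NNReal

namespace ProbabilityTheory

variable {a r : ℝ}

lemma integral_gammaMeasure (ha : 0 < a) (hr : 0 < r) (f : ℝ → ℝ) :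
    ∫ x, f x ∂gammaMeasure a r = ∫ x, gammaPDFReal a r x * f x := by
  rw [gammaMeasure, integral_withDensity_eq_integral_toReal_smul (f := gammaPDF a r)
    (measurable_gammaPDFReal a r).ennreal_ofReal (ae_of_all _ fun _ ↦ ENNReal.ofReal_lt_top)]
  simp [gammaPDF, ENNReal.toReal_ofReal (gammaPDFReal_nonneg ha hr _)]

lemma integrable_gammaMeasure_iff (ha : 0 < a) (hr : 0 < r) {f : ℝ → ℝ} :
    Integrable f (gammaMeasure a r) ↔ Integrable (fun x ↦ gammaPDFReal a r x * f x) := by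
  rw [gammaMeasure, integrable_withDensity_iff_integrable_smul' (f := gammaPDF a r)
    (measurable_gammaPDFReal a r).ennreal_ofReal (ae_of_all _ fun _ ↦ ENNReal.ofReal_lt_top)]
  simp [gammaPDF, ENNReal.toReal_ofReal (gammaPDFReal_nonneg ha hr _)]

lemma integrable_gammaPDFReal (ha : 0 < a) (hr : 0 < r) : Integrable (gammaPDFReal a r) := by
  have := isProbabilityMeasure_gammaMeasure ha hr
  simpa using (integrable_gammaMeasure_iff ha hr (f := 1)).1 (integrable_const 1)

lemma integral_gammaPDFReal (ha : 0 < a) (hr : 0 < r) : ∫ x, gammaPDFReal a r x = 1 := by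
  have := isProbabilityMeasure_gammaMeasure ha hr
  simpa using (integral_gammaMeasure ha hr 1).symm

lemma gammaPDFReal_mul_self (ha : 0 < a) (hr : 0 < r) (x : ℝ) :
    gammaPDFReal a r x * x = a / r * gammaPDFReal (a + 1) r x := by
  unfold gammaPDFReal
  split_ifs with hx
  · have hxa : x ^ a = x ^ (a - 1) * x := by
      simpa using Real.rpow_add_one' hx (y := a - 1) (by simpa using ha.ne')
    rw [add_sub_cancel_right, hxa, Real.rpow_add_one hr.ne', Real.Gamma_add_one ha.ne']
    field_simp [(Real.Gamma_pos_of_pos ha).ne']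
  · simp

lemma gammaPDFReal_mul_inv (ha : 1 < a) (hr : 0 < r) {x : ℝ} (hx : x ≠ 0) :
    gammaPDFReal a r x * x⁻¹ = r / (a - 1) * gammaPDFReal (a - 1) r x := by
  have h := gammaPDFReal_mul_self (sub_pos.2 ha) hr x
  rw [sub_add_cancel] at h
  have ha1 : a - 1 ≠ 0 := by linarith
  calc gammaPDFReal a r x * x⁻¹ = r / (a - 1) * ((a - 1) / r * gammaPDFReal a r x) * x⁻¹ := by
        field_simp
    _ = r / (a - 1) * gammaPDFReal (a - 1) r x := by rw [← h]; field_simp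

lemma integrable_id_gammaMeasure (ha : 0 < a) (hr : 0 < r) :
    Integrable (fun x ↦ x) (gammaMeasure a r) := by
  simp_rw [integrable_gammaMeasure_iff ha hr, gammaPDFReal_mul_self ha hr]
  exact (integrable_gammaPDFReal (by linarith) hr).const_mul _

lemma integral_id_gammaMeasure (ha : 0 < a) (hr : 0 < r) :
    ∫ x, x ∂gammaMeasure a r = a / r := by
  rw [integral_gammaMeasure ha hr]
  simp_rw [gammaPDFReal_mul_self ha hr]
  rw [integral_const_mul, integral_gammaPDFReal (by linarith) hr, mul_one]

lemma gammaPDFReal_mul_inv_ae_eq (ha : 1 < a) (hr : 0 < r) :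
    (fun x ↦ gammaPDFReal a r x * x⁻¹) =ᵐ[volume]
      fun x ↦ r / (a - 1) * gammaPDFReal (a - 1) r x := by
  filter_upwards [compl_mem_ae_iff.2 (measure_singleton (0 : ℝ))] with x hx
  exact gammaPDFReal_mul_inv ha hr hx

lemma integrable_inv_gammaMeasure (ha : 1 < a) (hr : 0 < r) :
    Integrable (fun x ↦ x⁻¹) (gammaMeasure a r) := by
  rw [integrable_gammaMeasure_iff (by linarith) hr]
  exact ((integrable_gammaPDFReal (by linarith) hr).const_mul _).congr
    (gammaPDFReal_mul_inv_ae_eq ha hr).symm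

lemma integral_inv_gammaMeasure (ha : 1 < a) (hr : 0 < r) :
    ∫ x, x⁻¹ ∂gammaMeasure a r = r / (a - 1) := by
  rw [integral_gammaMeasure (by linarith) hr, integral_congr_ae (gammaPDFReal_mul_inv_ae_eq ha hr),
    integral_const_mul, integral_gammaPDFReal (by linarith) hr, mul_one]

noncomputable def chiSquared (k : ℝ) : Measure ℝ := gammaMeasure (k / 2) (1 / 2)

variable {k : ℝ}

lemma integrable_id_chiSquared (hk : 0 < k) : Integrable (fun x ↦ x) (chiSquared k) :=
  integrable_id_gammaMeasure (by linarith) one_half_pos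

lemma integral_id_chiSquared (hk : 0 < k) : ∫ x, x ∂chiSquared k = k := by
  rw [chiSquared, integral_id_gammaMeasure (by linarith) one_half_pos]
  ring

lemma integrable_inv_chiSquared (hk : 2 < k) : Integrable (fun x ↦ x⁻¹) (chiSquared k) :=
  integrable_inv_gammaMeasure (by linarith) one_half_pos

lemma integral_inv_chiSquared (hk : 2 < k) : ∫ x, x⁻¹ ∂chiSquared k = (k - 2)⁻¹ := by
  rw [chiSquared, integral_inv_gammaMeasure (by linarith) one_half_pos]
  field_simp

lemma integrable_sq_gaussianReal (μ : ℝ) (v : ℝ≥0) :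
    Integrable (fun x ↦ x ^ 2) (gaussianReal μ v) :=
  (memLp_id_gaussianReal 2).integrable_sq

lemma integral_sq_gaussianReal_zero (v : ℝ≥0) : ∫ x, x ^ 2 ∂gaussianReal 0 v = v := by
  rw [← variance_of_integral_eq_zero aemeasurable_id' integral_id_gaussianReal,
    variance_fun_id_gaussianReal]

section

variable {Ω 𝓧 : Type*} {mΩ : MeasurableSpace Ω} {m𝓧 : MeasurableSpace 𝓧} {P : Measure Ω}

lemma HasLaw.integrable_comp {X : Ω → 𝓧} {μ : Measure 𝓧} (hX : HasLaw X μ P) {f : 𝓧 → ℝ}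
    (hf : Integrable f μ) : Integrable (f ∘ X) P :=
  (hX.map_eq ▸ hf).comp_aemeasurable hX.aemeasurable

lemma integral_mul_one_add_div_of_indepFun {X G V : Ω → ℝ} (hX : Integrable X P)
    (hG : Integrable G P) (hV : Integrable (fun ω ↦ (V ω)⁻¹) P) (hGV : IndepFun G V P)
    (hXGV : IndepFun X (fun ω ↦ G ω / V ω) P) :
    ∫ ω, X ω * (1 + G ω / V ω) ∂P = P[X] * (1 + P[G] * ∫ ω, (V ω)⁻¹ ∂P) := by
  have hGV' : IndepFun G (fun ω ↦ (V ω)⁻¹) P := hGV.comp measurable_id measurable_inv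
  have hW : Integrable (fun ω ↦ G ω / V ω) P := by
    simpa only [Pi.mul_def, div_eq_mul_inv] using hGV'.integrable_mul hG hV
  have hEW : ∫ ω, G ω / V ω ∂P = P[G] * ∫ ω, (V ω)⁻¹ ∂P := by
    simpa only [div_eq_mul_inv] using
      hGV'.integral_fun_mul_eq_mul_integral hG.aestronglyMeasurable hV.aestronglyMeasurable
  have hXW : Integrable (fun ω ↦ X ω * (G ω / V ω)) P := by
    simpa only [Pi.mul_def] using hXGV.integrable_mul hX hW
  simp_rw [mul_one_add]
  rw [integral_add hX hXW,
    hXGV.integral_fun_mul_eq_mul_integral hX.aestronglyMeasurable hW.aestronglyMeasurable, hEW]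

lemma integral_posteriorDraw_estimator
    {U_obs U_PD Z_PD Z_imp U_imp : Ω → ℝ} {k_obs k_PD k_imp : ℝ} {v_PD v_imp : ℝ≥0} (σ N c : ℝ)
    (hk_obs : 0 < k_obs) (hk_PD : 2 < k_PD) (hk_imp : 0 < k_imp)
    (hU : HasLaw U_obs (chiSquared k_obs) P) (hUPD : HasLaw U_PD (chiSquared k_PD) P)
    (hZPD : HasLaw Z_PD (gaussianReal 0 v_PD) P) (hZimp : HasLaw Z_imp (gaussianReal 0 v_imp) P)
    (hUimp : HasLaw U_imp (chiSquared k_imp) P) (hZZ : IndepFun Z_imp Z_PD P)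
    (hGV : IndepFun (fun ω ↦ U_imp ω + c * (Z_imp ω + Z_PD ω) ^ 2) U_PD P)
    (hXGV : IndepFun U_obs (fun ω ↦ (U_imp ω + c * (Z_imp ω + Z_PD ω) ^ 2) / U_PD ω) P) :
    ∫ ω, σ ^ 2 * (U_obs ω / N) * (1 + (U_imp ω + c * (Z_imp ω + Z_PD ω) ^ 2) / U_PD ω) ∂P
      = σ ^ 2 * (k_obs / N) * (1 + (k_imp + c * (v_imp + v_PD)) / (k_PD - 2)) := by
  have hU_int : Integrable U_obs P := hU.integrable_comp (integrable_id_chiSquared hk_obs)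
  have hUimp_int : Integrable U_imp P := hUimp.integrable_comp (integrable_id_chiSquared hk_imp)
  have hinv_int : Integrable (fun ω ↦ (U_PD ω)⁻¹) P :=
    hUPD.integrable_comp (integrable_inv_chiSquared hk_PD)
  have hS : HasLaw (Z_imp + Z_PD) (gaussianReal 0 (v_imp + v_PD)) P :=
    ⟨hZimp.aemeasurable.add hZPD.aemeasurable,
      by simpa using gaussianReal_add_gaussianReal_of_indepFun hZZ hZimp.map_eq hZPD.map_eq⟩
  have hS_sq_int : Integrable (fun ω ↦ (Z_imp ω + Z_PD ω) ^ 2) P :=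
    hS.integrable_comp (integrable_sq_gaussianReal 0 _)
  have hES2 : ∫ ω, (Z_imp ω + Z_PD ω) ^ 2 ∂P = v_imp + v_PD := by
    rw [← NNReal.coe_add, ← integral_sq_gaussianReal_zero]
    exact hS.integral_comp (f := fun x ↦ x ^ 2) (by fun_prop)
  have hEV : ∫ ω, (U_PD ω)⁻¹ ∂P = (k_PD - 2)⁻¹ := by
    rw [← integral_inv_chiSquared hk_PD]
    exact hUPD.integral_comp measurable_inv.aestronglyMeasurable
  have hG_int : Integrable (fun ω ↦ U_imp ω + c * (Z_imp ω + Z_PD ω) ^ 2) P :=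
    hUimp_int.add (hS_sq_int.const_mul c)
  simp_rw [mul_assoc, div_mul_eq_mul_div, integral_const_mul, integral_div]
  rw [integral_mul_one_add_div_of_indepFun hU_int hG_int hinv_int hGV hXGV,
    integral_add hUimp_int (hS_sq_int.const_mul c), integral_const_mul, hES2, hEV, hU.integral_eq,
    hUimp.integral_eq, integral_id_chiSquared hk_obs, integral_id_chiSquared hk_imp]
  ring

lemma indepFun_posteriorDraw_of_iIndepFun {U_obs Z_obs U_PD Z_PD Z_imp U_imp : Ω → ℝ}
    (hindep : iIndepFun ![U_obs, Z_obs, U_PD, Z_PD, Z_imp, U_imp] P)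
    (hmeas : ∀ i, Measurable (![U_obs, Z_obs, U_PD, Z_PD, Z_imp, U_imp] i)) (c : ℝ) :
    IndepFun Z_imp Z_PD P ∧ IndepFun (fun ω ↦ U_imp ω + c * (Z_imp ω + Z_PD ω) ^ 2) U_PD P ∧
      IndepFun U_obs (fun ω ↦ (U_imp ω + c * (Z_imp ω + Z_PD ω) ^ 2) / U_PD ω) P :=
  ⟨hindep.indepFun (i := 4) (j := 3) (by decide),
    (hindep.indepFun_finset {3, 4, 5} {2} (by decide) hmeas).comp
      (φ := fun x : ({3, 4, 5} : Finset (Fin 6)) → ℝ ↦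
        x ⟨5, by decide⟩ + c * (x ⟨4, by decide⟩ + x ⟨3, by decide⟩) ^ 2)
      (ψ := fun x : ({2} : Finset (Fin 6)) → ℝ ↦ x ⟨2, by decide⟩) (by fun_prop) (by fun_prop),
    (hindep.indepFun_finset {0} {2, 3, 4, 5} (by decide) hmeas).comp
      (φ := fun x : ({0} : Finset (Fin 6)) → ℝ ↦ x ⟨0, by decide⟩)
      (ψ := fun x : ({2, 3, 4, 5} : Finset (Fin 6)) → ℝ ↦
        (x ⟨5, by decide⟩ + c * (x ⟨4, by decide⟩ + x ⟨3, by decide⟩) ^ 2) / x ⟨2, by decide⟩)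
      (by fun_prop) (by fun_prop)⟩

end

end ProbabilityTheory

lemma posteriorDraw_bias_eq {σ o m ν : ℝ} (hN : o + m - 1 ≠ 0) (hD : o + ν - 3 ≠ 0) :
    σ ^ 2 * ((o - 1) / (o + m - 1)) * (1 + m / (o - 1 + ν - 2)) - σ ^ 2
      = -σ ^ 2 * (m * (ν - 2)) / ((o + m - 1) * (o + ν - 3)) := by
  rw [show o - 1 + ν - 2 = o + ν - 3 by ring]
  field_simp
  ring

theorem stmt8_general
    {Ω : Type*} [MeasurableSpace Ω] (P : Measure Ω)
    (σ : ℝ) (hσ : 0 < σ)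
    (n_obs n_mis : ℕ) (hnobs : 2 ≤ n_obs) (hnmis : 2 ≤ n_mis)
    (ν_prior : ℝ)
    (U_obs Z_obs U_PD Z_PD Z_imp U_imp : Ω → ℝ)
    (hUmeas : Measurable U_obs) (hZmeas : Measurable Z_obs)
    (hUPDmeas : Measurable U_PD) (hZPDmeas : Measurable Z_PD)
    (hZimpmeas : Measurable Z_imp) (hUimpmeas : Measurable U_imp)
    (hU : P.map U_obs = gammaMeasure (((n_obs : ℝ) - 1) / 2) (1 / 2))
    (hUPD : P.map U_PD = gammaMeasure (((n_obs : ℝ) - 1 + ν_prior) / 2) (1 / 2))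
    (hZPD : P.map Z_PD = gaussianReal 0 (1 / (n_obs : ℝ≥0)))
    (hZimp : P.map Z_imp = gaussianReal 0 (1 / (n_mis : ℝ≥0)))
    (hUimp : P.map U_imp = gammaMeasure (((n_mis : ℝ) - 1) / 2) (1 / 2))
    (hindep : iIndepFun
      ![U_obs, Z_obs, U_PD, Z_PD, Z_imp, U_imp] P) :
    (n_obs : ℝ) - 1 + ν_prior > 2 →
      ((∫ ω, σ ^ 2 * (U_obs ω / (((n_obs : ℝ) + (n_mis : ℝ)) - 1))
          * (1 + (U_imp ω + ((n_mis : ℝ) * (n_obs : ℝ) / ((n_obs : ℝ) + (n_mis : ℝ)))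
              * (Z_imp ω + Z_PD ω) ^ 2) / U_PD ω) ∂P) - σ ^ 2
        = -σ ^ 2 * ((n_mis : ℝ) * (ν_prior - 2))
            / ((((n_obs : ℝ) + (n_mis : ℝ)) - 1) * ((n_obs : ℝ) + ν_prior - 3)))
      ∧ ((∫ ω, σ ^ 2 * (U_obs ω / (((n_obs : ℝ) + (n_mis : ℝ)) - 1))
          * (1 + (U_imp ω + ((n_mis : ℝ) * (n_obs : ℝ) / ((n_obs : ℝ) + (n_mis : ℝ)))
              * (Z_imp ω + Z_PD ω) ^ 2) / U_PD ω) ∂P) = σ ^ 2 ↔ ν_prior = 2) := by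
  intro hν
  have ho : (2 : ℝ) ≤ n_obs := by exact_mod_cast hnobs
  have hm : (2 : ℝ) ≤ n_mis := by exact_mod_cast hnmis
  set c : ℝ := (n_mis : ℝ) * (n_obs : ℝ) / ((n_obs : ℝ) + (n_mis : ℝ))
  obtain ⟨hZZ, hGV, hXGV⟩ := indepFun_posteriorDraw_of_iIndepFun hindep
    (by intro i; fin_cases i <;> assumption) c
  have himp_mean : (n_mis : ℝ) - 1
      + c * (((1 / (n_mis : ℝ≥0) : ℝ≥0) : ℝ) + ((1 / (n_obs : ℝ≥0) : ℝ≥0) : ℝ)) = n_mis := by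
    simp only [c, NNReal.coe_div, NNReal.coe_one, NNReal.coe_natCast]
    field_simp
    ring
  rw [integral_posteriorDraw_estimator σ _ _ (by linarith) hν (by linarith)
    ⟨hUmeas.aemeasurable, hU⟩ ⟨hUPDmeas.aemeasurable, hUPD⟩ ⟨hZPDmeas.aemeasurable, hZPD⟩
    ⟨hZimpmeas.aemeasurable, hZimp⟩ ⟨hUimpmeas.aemeasurable, hUimp⟩ hZZ hGV hXGV, himp_mean]
  have hN : (n_obs : ℝ) + n_mis - 1 ≠ 0 := by linarith
  have hD : (n_obs : ℝ) + ν_prior - 3 ≠ 0 := by linarith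
  refine ⟨posteriorDraw_bias_eq hN hD, ?_⟩
  rw [← sub_eq_zero, posteriorDraw_bias_eq hN hD]
  simp [hσ.ne', hN, hD, sub_eq_zero, show n_mis ≠ 0 by omega]

/-- bias of the single-imputation variance estimator under posterior-draw
imputation; it is unbiased iff ν_prior = 2. -/
theorem stmt8
    {Ω : Type*} [MeasurableSpace Ω] (P : Measure Ω) [IsProbabilityMeasure P]
    (μ σ : ℝ) (hσ : 0 < σ)
    (n_obs n_mis : ℕ) (hnobs : 2 ≤ n_obs) (hnmis : 2 ≤ n_mis)
    (ν_prior : ℝ) (hνPD : 0 < (n_obs : ℝ) - 1 + ν_prior)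
    (U_obs Z_obs U_PD Z_PD Z_imp U_imp : Ω → ℝ)
    (hUmeas : Measurable U_obs) (hZmeas : Measurable Z_obs)
    (hUPDmeas : Measurable U_PD) (hZPDmeas : Measurable Z_PD)
    (hZimpmeas : Measurable Z_imp) (hUimpmeas : Measurable U_imp)
    (hU : P.map U_obs = gammaMeasure (((n_obs : ℝ) - 1) / 2) (1 / 2))
    (hZ : P.map Z_obs = gaussianReal 0 (1 / (n_obs : ℝ≥0)))
    (hUPD : P.map U_PD = gammaMeasure (((n_obs : ℝ) - 1 + ν_prior) / 2) (1 / 2))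
    (hZPD : P.map Z_PD = gaussianReal 0 (1 / (n_obs : ℝ≥0)))
    (hZimp : P.map Z_imp = gaussianReal 0 (1 / (n_mis : ℝ≥0)))
    (hUimp : P.map U_imp = gammaMeasure (((n_mis : ℝ) - 1) / 2) (1 / 2))
    (hindep : iIndepFun
      ![U_obs, Z_obs, U_PD, Z_PD, Z_imp, U_imp] P) :
    (n_obs : ℝ) - 1 + ν_prior > 2 →
      ((∫ ω, σ ^ 2 * (U_obs ω / (((n_obs : ℝ) + (n_mis : ℝ)) - 1))
          * (1 + (U_imp ω + ((n_mis : ℝ) * (n_obs : ℝ) / ((n_obs : ℝ) + (n_mis : ℝ)))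
              * (Z_imp ω + Z_PD ω) ^ 2) / U_PD ω) ∂P) - σ ^ 2
        = -σ ^ 2 * ((n_mis : ℝ) * (ν_prior - 2))
            / ((((n_obs : ℝ) + (n_mis : ℝ)) - 1) * ((n_obs : ℝ) + ν_prior - 3)))
      ∧ ((∫ ω, σ ^ 2 * (U_obs ω / (((n_obs : ℝ) + (n_mis : ℝ)) - 1))
          * (1 + (U_imp ω + ((n_mis : ℝ) * (n_obs : ℝ) / ((n_obs : ℝ) + (n_mis : ℝ)))
              * (Z_imp ω + Z_PD ω) ^ 2) / U_PD ω) ∂P) = σ ^ 2 ↔ ν_prior = 2) :=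
  stmt8_general P σ hσ n_obs n_mis hnobs hnmis ν_prior U_obs Z_obs U_PD Z_PD Z_imp U_imp hUmeas
    hZmeas hUPDmeas hZPDmeas hZimpmeas hUimpmeas hU hUPD hZPD hZimp hUimp hindep
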